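/- arXiv:2209.10336 — 3 statements merged into one kernel-verified Lean document; each statement's English description precedes it below -/
import Mathlib

section
/- Define ψ(t,μ) piecewise by: ψ = 0 if t ≤ 0; ψ = t²/(2μ) if 0 < t ≤ μ; ψ = (1/4)(t-μ)² + t - μ/2 if μ < t ≤ μ + √μ; ψ = -(1/4)(t - μ - 2√μ)² + t if μ + √μ < t ≤ μ + 2√μ; ψ = t if t > μ + 2√μ. Then for every μ ∈ (0,1] and t ∈ ℝ, |ψ(t,μ) - max{t,0}| ≤ μ/2. -/
/-- The piecewise smoothing function of `max{t,0}` from equation (3.8) of the paper. -/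
noncomputable def psi (μ t : ℝ) : ℝ :=
  if t ≤ 0 then 0
  else if t ≤ μ then t ^ 2 / (2 * μ)
  else if t ≤ μ + Real.sqrt μ then (1 / 4) * (t - μ) ^ 2 + t - μ / 2
  else if t ≤ μ + 2 * Real.sqrt μ then -(1 / 4) * (t - μ - 2 * Real.sqrt μ) ^ 2 + t
  else t

/-! On `(0, μ]`, `t ^ 2 / (2μ) = t - μ / 2 + (t - μ) ^ 2 / (2μ)`. On the next two pieces `ψ`
differs from `t - μ / 2`, resp. `t`, by `±(t - c) ^ 2 / 4` with `|t - c| ≤ √μ`, hence by at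
most `μ / 4`. -/

lemma sub_half_le_sq_div {μ : ℝ} (hμ : 0 < μ) (t : ℝ) : t - μ / 2 ≤ t ^ 2 / (2 * μ) := by
  rw [le_div_iff₀ (by positivity)]
  nlinarith [sq_nonneg (t - μ)]

lemma sq_div_le_self {μ t : ℝ} (hμ : 0 < μ) (ht : 0 ≤ t) (htμ : t ≤ 2 * μ) :
    t ^ 2 / (2 * μ) ≤ t := by
  rw [div_le_iff₀ (by positivity)]
  nlinarith

lemma sq_le_of_sub_mem_Icc_sqrt {μ x c : ℝ} (hμ : 0 ≤ μ) (h₁ : c - Real.sqrt μ ≤ x)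
    (h₂ : x ≤ c + Real.sqrt μ) : (x - c) ^ 2 ≤ μ :=
  (Real.sq_le hμ).2 ⟨by linarith, by linarith⟩

lemma psi_le_max {μ : ℝ} (hμ : 0 < μ) (t : ℝ) : psi μ t ≤ max t 0 := by
  have hs : 0 ≤ Real.sqrt μ := Real.sqrt_nonneg μ
  unfold psi
  split_ifs with h₀ h₁ h₂ h₃
  · exact le_max_right t 0
  all_goals rw [max_eq_left (le_of_not_ge h₀)]
  · exact sq_div_le_self hμ (le_of_not_ge h₀) (by linarith)
  · nlinarith [sq_le_of_sub_mem_Icc_sqrt hμ.le (x := t) (c := μ) (by linarith) h₂]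
  · nlinarith [sq_nonneg (t - μ - 2 * Real.sqrt μ)]

lemma max_sub_half_le_psi {μ : ℝ} (hμ : 0 < μ) (t : ℝ) : max t 0 - μ / 2 ≤ psi μ t := by
  unfold psi
  split_ifs with h₀ h₁ h₂ h₃
  · rw [max_eq_right h₀]; linarith
  all_goals rw [max_eq_left (le_of_not_ge h₀)]
  · exact sub_half_le_sq_div hμ t
  · nlinarith [sq_nonneg (t - μ)]
  · have h := sq_le_of_sub_mem_Icc_sqrt hμ.le (x := t) (c := μ + 2 * Real.sqrt μ)
      (by linarith) (by linarith)
    nlinarith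
  · linarith

/-- `|ψ(t,μ) - max{t,0}| ≤ μ/2` for all `μ ∈ (0,1]`, `t ∈ ℝ`. -/
theorem stmt9 : ∀ μ ∈ Set.Ioc (0 : ℝ) 1, ∀ t : ℝ, |psi μ t - max t 0| ≤ μ / 2 := by
  rintro μ ⟨hμ, -⟩ t
  rw [abs_sub_comm, abs_le]
  constructor
  · linarith [psi_le_max hμ t]
  · linarith [max_sub_half_le_psi hμ t]
end

section
/- With ψ(t,μ) the piecewise smoothing function (0 for t ≤ 0; t²/(2μ) for 0 < t ≤ μ; (1/4)(t-μ)² + t - μ/2 for μ < t ≤ μ+√μ; -(1/4)(t-μ-2√μ)² + t for μ+√μ < t ≤ μ+2√μ; t for t > μ+2√μ), for each fixed μ ∈ (0,1] the function t ↦ ψ(t,μ) is continuously differentiable on ℝ, with ∂ψ/∂t = 0 for t ≤ 0, ∂ψ/∂t = 1 for t ≥ μ + 2√μ, and 0 ≤ ∂ψ/∂t ≤ 1 + √μ/2 for 0 < t < μ + 2√μ. -/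
/-! Each piece of `ψ(·, μ)` is a polynomial of degree at most two, and at each breakpoint
`0, μ, μ + √μ, μ + 2√μ` neighbouring pieces agree in value and slope. Gluing `C¹` functions
with matching value and slope at a point gives a `C¹` function, so `ψ(·, μ)` is `C¹` with a
piecewise-linear derivative `ψ'`, which rises from `0` at `t = 0` to `1 + √μ/2` at
`t = μ + √μ` and falls back to `1` at `t = μ + 2√μ`. -/

open Set

theorem hasDerivAt_ite_le {g g' h h' : ℝ → ℝ} {a : ℝ} (hg : ∀ t, HasDerivAt g (g' t) t)
    (hh : ∀ t, HasDerivAt h (h' t) t) (hval : g a = h a) (hder : g' a = h' a) (t : ℝ) :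
    HasDerivAt (fun t => if t ≤ a then g t else h t) (if t ≤ a then g' t else h' t) t := by
  rcases lt_trichotomy t a with hta | hta | hat
  · rw [if_pos hta.le]
    refine (hg t).congr_of_eventuallyEq ?_
    filter_upwards [Iio_mem_nhds hta] with u hu
    exact if_pos hu.le
  · rw [hta, if_pos le_rfl]
    have hleft : HasDerivWithinAt (fun t => if t ≤ a then g t else h t) (g' a) (Iic a) a :=
      (hg a).hasDerivWithinAt.congr (fun u hu => if_pos hu) (if_pos le_rfl)
    have hright : HasDerivWithinAt (fun t => if t ≤ a then g t else h t) (g' a) (Ici a) a := by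
      refine hder ▸ (hh a).hasDerivWithinAt.congr (fun u hu => ?_) (by simp [hval])
      rcases (mem_Ici.1 hu).eq_or_lt with rfl | hau
      · simp [hval]
      · exact if_neg hau.not_ge
    simpa [Iic_union_Ici, hasDerivWithinAt_univ] using hleft.union hright
  · rw [if_neg hat.not_ge]
    refine (hh t).congr_of_eventuallyEq ?_
    filter_upwards [Ioi_mem_nhds hat] with u hu
    exact if_neg (not_le.2 hu)

def HasContinuousDeriv (f f' : ℝ → ℝ) : Prop :=
  (∀ t, HasDerivAt f (f' t) t) ∧ Continuous f'

namespace HasContinuousDeriv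

variable {f f' g g' h h' : ℝ → ℝ}

theorem deriv_eq (hf : HasContinuousDeriv f f') : deriv f = f' :=
  funext fun t => (hf.1 t).deriv

theorem contDiff (hf : HasContinuousDeriv f f') : ContDiff ℝ 1 f :=
  contDiff_one_iff_deriv.2 ⟨fun t => (hf.1 t).differentiableAt, hf.deriv_eq ▸ hf.2⟩

theorem ite_le {a : ℝ} (hg : HasContinuousDeriv g g') (hh : HasContinuousDeriv h h')
    (hval : g a = h a) (hder : g' a = h' a) :
    HasContinuousDeriv (fun t => if t ≤ a then g t else h t)
      (fun t => if t ≤ a then g' t else h' t) :=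
  ⟨hasDerivAt_ite_le hg.1 hh.1 hval hder,
    hg.2.if_le hh.2 continuous_id continuous_const fun _ ht => ht ▸ hder⟩

end HasContinuousDeriv

theorem hasContinuousDeriv_const (c : ℝ) : HasContinuousDeriv (fun _ => c) fun _ => 0 :=
  ⟨fun t => hasDerivAt_const t c, continuous_const⟩

theorem hasContinuousDeriv_id : HasContinuousDeriv (fun t => t) fun _ => 1 :=
  ⟨hasDerivAt_id', continuous_const⟩

theorem hasContinuousDeriv_quadratic {f f' : ℝ → ℝ} (a b c d : ℝ)
    (hf : ∀ t, f t = a * (t - b) ^ 2 + c * t + d) (hf' : ∀ t, f' t = 2 * a * (t - b) + c) :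
    HasContinuousDeriv f f' := by
  rw [funext hf, funext hf']
  refine ⟨fun t => ?_, by fun_prop⟩
  refine (((((hasDerivAt_id' t).sub_const b).fun_pow 2).const_mul a).fun_add
    ((hasDerivAt_id' t).const_mul c)).add_const d |>.congr_deriv ?_
  norm_num
  ring

noncomputable def psiDeriv (μ t : ℝ) : ℝ :=
  if t ≤ 0 then 0
  else if t ≤ μ then t / μ
  else if t ≤ μ + √μ then (t - μ) / 2 + 1
  else if t ≤ μ + 2 * √μ then -(t - μ - 2 * √μ) / 2 + 1
  else 1

section

variable {μ : ℝ}

theorem hasContinuousDeriv_psi (hμ : 0 < μ) : HasContinuousDeriv (psi μ) (psiDeriv μ) := by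
  have hsq : √μ ^ 2 = μ := Real.sq_sqrt hμ.le
  have piece₁ := hasContinuousDeriv_quadratic (1 / (2 * μ)) 0 0 0
    (fun t => show t ^ 2 / (2 * μ) = _ by ring) (fun t => show t / μ = _ by ring)
  have piece₂ := hasContinuousDeriv_quadratic (1 / 4) μ 1 (-(μ / 2))
    (fun t => show 1 / 4 * (t - μ) ^ 2 + t - μ / 2 = _ by ring)
    (fun t => show (t - μ) / 2 + 1 = _ by ring)
  have piece₃ := hasContinuousDeriv_quadratic (-(1 / 4)) (μ + 2 * √μ) 1 0
    (fun t => show -(1 / 4) * (t - μ - 2 * √μ) ^ 2 + t = _ by ring)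
    (fun t => show -(t - μ - 2 * √μ) / 2 + 1 = _ by ring)
  unfold psi psiDeriv
  refine (hasContinuousDeriv_const 0).ite_le
    (piece₁.ite_le (piece₂.ite_le (piece₃.ite_le hasContinuousDeriv_id ?_ ?_) ?_ ?_) ?_ ?_) ?_ ?_
  -- Values and slopes at the breakpoints; the one at `μ + √μ` needs `√μ ^ 2 = μ`.
  all_goals (try split_ifs) <;> first | linarith [Real.sqrt_nonneg μ] | (field_simp; ring)

theorem psiDeriv_of_nonpos {t : ℝ} (ht : t ≤ 0) : psiDeriv μ t = 0 :=
  if_pos ht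

theorem psiDeriv_of_le (hμ : 0 < μ) {t : ℝ} (ht : μ + 2 * √μ ≤ t) : psiDeriv μ t = 1 := by
  have hs : 0 < √μ := Real.sqrt_pos.2 hμ
  unfold psiDeriv
  split_ifs with h0 h1 h2 h3
  · linarith
  · linarith
  · linarith
  · rw [le_antisymm h3 ht]
    ring
  · rfl

theorem psiDeriv_mem_Icc (hμ : 0 < μ) (t : ℝ) : psiDeriv μ t ∈ Icc 0 (1 + √μ / 2) := by
  have hs : 0 < √μ := Real.sqrt_pos.2 hμ
  unfold psiDeriv
  split_ifs with h0 h1 h2 h3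
  · constructor <;> linarith
  · have : t / μ ≤ 1 := (div_le_one hμ).2 h1
    exact ⟨div_nonneg (by linarith) hμ.le, by linarith⟩
  · constructor <;> linarith
  · constructor <;> linarith
  · constructor <;> linarith

end

/-- for fixed `μ ∈ (0,1]`, `ψ(·,μ)` is continuously differentiable on `ℝ`
with `ψ' = 0` for `t ≤ 0`, `ψ' = 1` for `t ≥ μ + 2√μ`, and
`0 ≤ ψ' ≤ 1 + √μ/2` for `0 < t < μ + 2√μ`. -/
theorem stmt11 (μ : ℝ) (hμ : μ ∈ Set.Ioc (0 : ℝ) 1) :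
    ContDiff ℝ 1 (psi μ) ∧
    (∀ t : ℝ, t ≤ 0 → deriv (psi μ) t = 0) ∧
    (∀ t : ℝ, μ + 2 * Real.sqrt μ ≤ t → deriv (psi μ) t = 1) ∧
    ∀ t : ℝ, 0 < t → t < μ + 2 * Real.sqrt μ →
      deriv (psi μ) t ∈ Set.Icc (0 : ℝ) (1 + Real.sqrt μ / 2) := by
  have hψ := hasContinuousDeriv_psi hμ.1
  refine ⟨hψ.contDiff, fun t ht => ?_, fun t ht => ?_, fun t _ _ => ?_⟩ <;> rw [hψ.deriv_eq]
  exacts [psiDeriv_of_nonpos ht, psiDeriv_of_le hμ.1 ht, psiDeriv_mem_Icc hμ.1 t]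
end

section
/- In the setting of the previous statement, φ(t,μ) = P_{[a,b]}(t) holds exactly whenever t ≤ a - μ - 2√μ, or a ≤ t ≤ b, or t ≥ b + μ + 2√μ. -/
lemma psi_nonpos (μ t : ℝ) (ht : t ≤ 0) : psi μ t = 0 := by
  simp [psi, ht]

lemma psi_large (μ t : ℝ) (hμ : 0 < μ) (ht : μ + 2 * Real.sqrt μ ≤ t) : psi μ t = t := by
  have hs : 0 < Real.sqrt μ := Real.sqrt_pos.2 hμ
  have h1 : ¬ t ≤ 0 := by nlinarith
  have h2 : ¬ t ≤ μ := by nlinarith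
  have h3 : ¬ t ≤ μ + Real.sqrt μ := by nlinarith
  unfold psi
  rw [if_neg h1, if_neg h2, if_neg h3]
  split_ifs with h4
  · have : t = μ + 2 * Real.sqrt μ := le_antisymm h4 ht
    rw [this]; ring
  · rfl

/-- agrees exactly with the
projection  whenever
, or , or . -/
theorem stmt13 (a b : ℝ) (hab : a < b) (μ : ℝ) (hμ : μ ∈ Set.Ioc (0 : ℝ) 1) :
    ∀ t : ℝ,
      t ≤ a - μ - 2 * Real.sqrt μ ∨ (a ≤ t ∧ t ≤ b) ∨ b + μ + 2 * Real.sqrt μ ≤ t →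
      psi μ (a - t) + t - psi μ (t - b) = max (a - t) 0 + t - max (t - b) 0 := by
  intro t ht
  obtain ⟨hμ0, _⟩ := hμ
  have hs : 0 < Real.sqrt μ := Real.sqrt_pos.2 hμ0
  rcases ht with h | ⟨h1, h2⟩ | h
  · rw [psi_large μ _ hμ0 (by linarith), psi_nonpos μ _ (by nlinarith),
      max_eq_left (by nlinarith), max_eq_right (by nlinarith)]
  · rw [psi_nonpos μ _ (by linarith), psi_nonpos μ _ (by linarith),
      max_eq_right (by linarith), max_eq_right (by linarith)]
  · rw [psi_nonpos μ _ (by nlinarith), psi_large μ _ hμ0 (by linarith),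
      max_eq_right (by nlinarith), max_eq_left (by nlinarith)]
end
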